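/- Let G be a connected graph in W_p of independence number α, and let s_k be the number of independent sets of size k. Then p(α − k) s_k ≤ (k+1) s_{k+1} for all 1 ≤ k ≤ α − 1. -/
import Mathlib


open Finset
open scoped Classical

variable {V : Type*}

/-- `A` is an independent set of `G`. -/
def IsIndep (G : SimpleGraph V) (A : Finset V) : Prop :=
  ∀ u ∈ A, ∀ v ∈ A, ¬ G.Adj u v

/-- Open neighborhood of a set of vertices. -/
noncomputable def nbhd [Fintype V] (G : SimpleGraph V) (A : Finset V) : Finset V :=
  Finset.univ.filter fun v => v ∉ A ∧ ∃ u ∈ A, G.Adj u v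

/-- Independence number. -/
noncomputable def alphaNum [Fintype V] (G : SimpleGraph V) : ℕ :=
  (Finset.univ.filter fun A : Finset V => IsIndep G A).sup Finset.card

/-- Maximum independent set. -/
def IsMaxIndep [Fintype V] (G : SimpleGraph V) (S : Finset V) : Prop :=
  IsIndep G S ∧ S.card = alphaNum G

/-- The class W₂. -/
def InW2 [Fintype V] (G : SimpleGraph V) : Prop :=
  2 ≤ Fintype.card V ∧
    ∀ A B : Finset V, IsIndep G A → IsIndep G B → Disjoint A B →
      ∃ S T : Finset V, IsMaxIndep G S ∧ IsMaxIndep G T ∧ Disjoint S T ∧ A ⊆ S ∧ B ⊆ T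

/-- The class W_p. -/
def InWp [Fintype V] (G : SimpleGraph V) (p : ℕ) : Prop :=
  p ≤ Fintype.card V ∧
    ∀ A : Fin p → Finset V, (∀ i, IsIndep G (A i)) →
      (∀ i j, i ≠ j → Disjoint (A i) (A j)) →
      ∃ S : Fin p → Finset V, (∀ i, IsMaxIndep G (S i)) ∧
        (∀ i j, i ≠ j → Disjoint (S i) (S j)) ∧ ∀ i, A i ⊆ S i

/-- `l`-quasi-regularizability. -/
def QuasiReg [Fintype V] (G : SimpleGraph V) (l : ℕ) : Prop :=
  ∀ A : Finset V, IsIndep G A → l * A.card ≤ (nbhd G A).card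

/-- `s_k`: the number of independent sets of cardinality `k`. -/
noncomputable def indepCount [Fintype V] (G : SimpleGraph V) (k : ℕ) : ℕ :=
  (Finset.univ.filter fun A : Finset V => IsIndep G A ∧ A.card = k).card

/-- Closed neighborhood. -/
noncomputable def closedNbhd [Fintype V] (G : SimpleGraph V) (A : Finset V) : Finset V :=
  A ∪ nbhd G A



/-- The set of vertices extending the independent set `A`. -/
noncomputable def extSet [Fintype V] (G : SimpleGraph V) (A : Finset V) : Finset V :=
  Finset.univ.filter fun v => v ∉ A ∧ ∀ u ∈ A, ¬ G.Adj u v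

lemma mem_extSet [Fintype V] {G : SimpleGraph V} {A : Finset V} {v : V} :
    v ∈ extSet G A ↔ v ∉ A ∧ ∀ u ∈ A, ¬ G.Adj u v := by
  simp [extSet]

lemma disjoint_extSet [Fintype V] {G : SimpleGraph V} {A : Finset V} :
    Disjoint A (extSet G A) := by
  rw [Finset.disjoint_left]
  intro v hv hv'
  exact (mem_extSet.1 hv').1 hv

lemma isIndep_subset {G : SimpleGraph V} {A B : Finset V} (h : IsIndep G B) (hs : A ⊆ B) :
    IsIndep G A := fun u hu v hv => h u (hs hu) v (hs hv)

lemma card_le_alpha [Fintype V] {G : SimpleGraph V} {A : Finset V} (h : IsIndep G A) :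
    A.card ≤ alphaNum G :=
  Finset.le_sup (by simp [h])

lemma indep_insert [Fintype V] {G : SimpleGraph V} {A : Finset V} {v : V}
    (hA : IsIndep G A) (hv : v ∈ extSet G A) : IsIndep G (insert v A) := by
  obtain ⟨hvA, hnadj⟩ := mem_extSet.1 hv
  have hsym : ∀ u ∈ A, ¬ G.Adj v u := fun u hu h => hnadj u hu h.symm
  intro u hu w hw
  rcases Finset.mem_insert.1 hu with hu' | hu' <;>
    rcases Finset.mem_insert.1 hw with hw' | hw'
  · rw [hu', hw']; exact G.irrefl
  · rw [hu']; exact hsym w hw'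
  · rw [hw']; exact hnadj u hu'
  · exact hA u hu' w hw' 

lemma inter_extSet_card [Fintype V] {G : SimpleGraph V} {A T : Finset V}
    (hT : IsMaxIndep G T) (hAT : A ⊆ T) :
    alphaNum G - A.card ≤ (T ∩ extSet G A).card := by
  have hsub : T \ A ⊆ T ∩ extSet G A := by
    intro v hv
    rw [Finset.mem_sdiff] at hv
    exact Finset.mem_inter.2 ⟨hv.1, mem_extSet.2 ⟨hv.2, fun u hu => hT.1 u (hAT hu) v hv.1⟩⟩
  calc alphaNum G - A.card = (T \ A).card := by rw [Finset.card_sdiff_of_subset hAT, hT.2]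
  _ ≤ _ := Finset.card_le_card hsub

/-- Key lemma: in a `W_p` graph, every independent set `A` has at least
`p * (α - |A|)` extension vertices. -/
lemma extSet_card_ge [Fintype V] (G : SimpleGraph V) (p : ℕ) (hp : 1 ≤ p)
    (hWp : InWp G p) {A : Finset V} (hA : IsIndep G A) :
    p * (alphaNum G - A.card) ≤ (extSet G A).card := by
  set E := extSet G A with hE
  set α := alphaNum G with hα
  set k := A.card with hk
  let z : Fin p := ⟨0, hp⟩
  let F : Finset (Fin p → Finset V) := Finset.univ.filter fun S =>
    (∀ i, IsMaxIndep G (S i)) ∧ (∀ i j, i ≠ j → Disjoint (S i) (S j)) ∧ A ⊆ S z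
  have hFne : F.Nonempty := by
    obtain ⟨S, hSm, hSd, hSs⟩ := hWp.2 (fun j => if j = z then A else ∅)
      (by
        intro i
        by_cases h : i = z <;> simp only [h, if_pos, if_neg, if_true] <;>
          first
            | simpa using hA
            | (intro u hu; simp at hu))
      (by
        intro i j hij
        by_cases hi : i = z <;> by_cases hj : j = z <;>
          simp_all [Finset.disjoint_empty_left, Finset.disjoint_empty_right])
    refine ⟨S, Finset.mem_filter.2 ⟨Finset.mem_univ _, hSm, hSd, ?_⟩⟩
    have := hSs z
    simpa using this
  obtain ⟨S, hSF, hSmax⟩ := F.exists_max_image (fun S => ∑ i, (S i ∩ E).card) hFne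
  obtain ⟨hSm, hSd, hSz⟩ := (Finset.mem_filter.1 hSF).2
  have key : ∀ i, α - k ≤ (S i ∩ E).card := by
    intro i
    by_cases hiz : i = z
    · subst hiz
      exact inter_extSet_card (hSm _) hSz
    · by_contra hlt
      push_neg at hlt
      -- exchange argument
      let σ := Equiv.swap z i
      let C : Fin p → Finset V := fun j => (if j = z then A else ∅) ∪ (S (σ j) ∩ E)
      have hCindep : ∀ j, IsIndep G (C j) := by
        intro j
        by_cases hj : j = z
        · subst hj
          simp only [C, if_pos rfl]
          intro u hu w hw
          rcases Finset.mem_union.1 hu with hu | hu <;>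
            rcases Finset.mem_union.1 hw with hw | hw
          · exact hA u hu w hw
          · exact fun h => (mem_extSet.1 (Finset.mem_inter.1 hw).2).2 u hu h
          · exact fun h => (mem_extSet.1 (Finset.mem_inter.1 hu).2).2 w hw h.symm
          · exact hSm _ |>.1 u (Finset.mem_inter.1 hu).1 w (Finset.mem_inter.1 hw).1
        · simp only [C, if_neg hj, Finset.empty_union]
          exact isIndep_subset (hSm _).1 Finset.inter_subset_left
      have hCdisj : ∀ j j', j ≠ j' → Disjoint (C j) (C j') := by
        intro j j' hjj'
        simp only [C]
        apply Finset.disjoint_union_left.2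
        constructor
        · apply Finset.disjoint_union_right.2
          constructor
          · by_cases hj : j = z <;> by_cases hj' : j' = z <;>
              simp_all [Finset.disjoint_empty_left, Finset.disjoint_empty_right]
          · by_cases hj : j = z
            · subst hj
              simp only [if_pos rfl]
              exact disjoint_extSet.mono le_rfl Finset.inter_subset_right
            · simp [if_neg hj]
        · apply Finset.disjoint_union_right.2
          constructor
          · by_cases hj' : j' = z
            · subst hj'
              simp only [if_pos rfl]
              exact (disjoint_extSet.mono le_rfl Finset.inter_subset_right).symm
            · simp [if_neg hj']
          · exact (hSd (σ j) (σ j') (fun h => hjj' (σ.injective h))).mono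
              Finset.inter_subset_left Finset.inter_subset_left
      obtain ⟨U, hUm, hUd, hUs⟩ := hWp.2 C hCindep hCdisj
      have hAUz : A ⊆ U z := by
        refine subset_trans ?_ (hUs z)
        simp only [C, if_pos rfl]
        exact Finset.subset_union_left
      have hUF : U ∈ F :=
        Finset.mem_filter.2 ⟨Finset.mem_univ _, hUm, hUd, hAUz⟩
      have hle : (∑ j, (U j ∩ E).card) ≤ ∑ j, (S j ∩ E).card := hSmax U hUF
      -- derive a contradiction: the U-sum is strictly bigger
      have hiz' : i ∈ (Finset.univ : Finset (Fin p)).erase z :=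
        Finset.mem_erase.2 ⟨hiz, Finset.mem_univ _⟩
      have hsplit : ∀ f : Fin p → ℕ,
          (∑ j, f j) = f z + (f i + ∑ j ∈ (Finset.univ.erase z).erase i, f j) := by
        intro f
        rw [Finset.add_sum_erase _ f hiz', Finset.add_sum_erase _ f (Finset.mem_univ z)]
      have hUz : α - k ≤ (U z ∩ E).card := inter_extSet_card (hUm z) hAUz
      have hUi : (S z ∩ E).card ≤ (U i ∩ E).card := by
        apply Finset.card_le_card
        intro v hv
        refine Finset.mem_inter.2 ⟨?_, (Finset.mem_inter.1 hv).2⟩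
        apply hUs i
        simp only [C, if_neg hiz, Finset.empty_union]
        have : σ i = z := Equiv.swap_apply_right z i
        rw [this]
        exact hv
      have hUrest : ∀ j ∈ (Finset.univ.erase z).erase i,
          (S j ∩ E).card ≤ (U j ∩ E).card := by
        intro j hj
        have hji := (Finset.mem_erase.1 hj).1
        have hjz := (Finset.mem_erase.1 (Finset.mem_erase.1 hj).2).1
        apply Finset.card_le_card
        intro v hv
        refine Finset.mem_inter.2 ⟨?_, (Finset.mem_inter.1 hv).2⟩
        apply hUs j
        simp only [C, if_neg hjz, Finset.empty_union]
        have : σ j = j := Equiv.swap_apply_of_ne_of_ne hjz hji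
        rw [this]
        exact hv
      have hSzcard : α - k ≤ (S z ∩ E).card := inter_extSet_card (hSm z) hSz
      have hstrict : (∑ j, (S j ∩ E).card) < ∑ j, (U j ∩ E).card := by
        rw [hsplit (fun j => (S j ∩ E).card), hsplit (fun j => (U j ∩ E).card)]
        have h1 : (S i ∩ E).card < (U z ∩ E).card := lt_of_lt_of_le hlt hUz
        have h2 : (S z ∩ E).card ≤ (U i ∩ E).card := hUi
        have h3 : ∑ j ∈ (Finset.univ.erase z).erase i, (S j ∩ E).card ≤
            ∑ j ∈ (Finset.univ.erase z).erase i, (U j ∩ E).card :=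
          Finset.sum_le_sum hUrest
        omega
      exact absurd hle (not_le.2 hstrict)
  -- sum it up
  have hdisjE : ∀ i ∈ (Finset.univ : Finset (Fin p)), ∀ j ∈ (Finset.univ : Finset (Fin p)),
      i ≠ j → Disjoint (S i ∩ E) (S j ∩ E) :=
    fun i _ j _ h => (hSd i j h).mono Finset.inter_subset_left Finset.inter_subset_left
  calc p * (α - k) = ∑ _i : Fin p, (α - k) := by
        simp [Finset.sum_const, Finset.card_univ, mul_comm]
  _ ≤ ∑ i, (S i ∩ E).card := Finset.sum_le_sum fun i _ => key i
  _ = (Finset.univ.biUnion fun i => S i ∩ E).card := (Finset.card_biUnion hdisjE).symm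
  _ ≤ E.card := Finset.card_le_card (Finset.biUnion_subset.2 fun i _ => Finset.inter_subset_right)

/-- coefficient inequality for connected `W_p` graphs. -/
theorem wp_coeff_inequality [Fintype V] (G : SimpleGraph V)
    (p : ℕ) (hp : 1 ≤ p) (hconn : G.Connected) (hWp : InWp G p) :
    ∀ k : ℕ, 1 ≤ k → k + 1 ≤ alphaNum G →
      p * (alphaNum G - k) * indepCount G k ≤ (k + 1) * indepCount G (k + 1) := by
  intro k hk1 hk2
  set α := alphaNum G with hα
  set P := Finset.univ.filter fun A : Finset V => IsIndep G A ∧ A.card = k with hP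
  set Q := Finset.univ.filter fun A : Finset V => IsIndep G A ∧ A.card = k + 1 with hQ
  have hcount : indepCount G k = P.card := rfl
  have hcount' : indepCount G (k + 1) = Q.card := rfl
  -- double counting
  have hbij : (P.sigma fun A => extSet G A).card = (Q.sigma fun B => B).card := by
    apply Finset.card_nbij' (fun x => ⟨insert x.2 x.1, x.2⟩) (fun x => ⟨x.1.erase x.2, x.2⟩)
    · rintro ⟨A, v⟩ hx
      obtain ⟨hAP, hv⟩ := Finset.mem_sigma.1 hx
      obtain ⟨hAi, hAc⟩ := (Finset.mem_filter.1 hAP).2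
      refine Finset.mem_sigma.2 ⟨Finset.mem_filter.2 ⟨Finset.mem_univ _, indep_insert hAi hv, ?_⟩,
        Finset.mem_insert_self _ _⟩
      rw [Finset.card_insert_of_notMem (mem_extSet.1 hv).1, hAc]
    · rintro ⟨B, v⟩ hx
      obtain ⟨hBQ, hv⟩ := Finset.mem_sigma.1 hx
      obtain ⟨hBi, hBc⟩ := (Finset.mem_filter.1 hBQ).2
      refine Finset.mem_sigma.2 ⟨Finset.mem_filter.2 ⟨Finset.mem_univ _,
        isIndep_subset hBi (Finset.erase_subset _ _), ?_⟩, mem_extSet.2 ⟨Finset.notMem_erase _ _,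
        fun u hu => hBi u (Finset.mem_of_mem_erase hu) v hv⟩⟩
      rw [Finset.card_erase_of_mem hv, hBc]
      omega
    · rintro ⟨A, v⟩ hx
      obtain ⟨hAP, hv⟩ := Finset.mem_sigma.1 hx
      simp only [Finset.erase_insert (mem_extSet.1 hv).1]
    · rintro ⟨B, v⟩ hx
      obtain ⟨hBQ, hv⟩ := Finset.mem_sigma.1 hx
      simp only [Finset.insert_erase hv]
  have hQsum : (Q.sigma fun B => B).card = (k + 1) * Q.card := by
    rw [Finset.card_sigma]
    rw [Finset.sum_congr rfl fun B hB => (Finset.mem_filter.1 hB).2.2]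
    simp [mul_comm]
  have hPsum : p * (α - k) * P.card ≤ (P.sigma fun A => extSet G A).card := by
    rw [Finset.card_sigma]
    calc p * (α - k) * P.card = ∑ _A ∈ P, p * (α - k) := by
          simp [Finset.sum_const, mul_comm]
    _ ≤ ∑ A ∈ P, (extSet G A).card := by
          apply Finset.sum_le_sum
          intro A hAP
          obtain ⟨hAi, hAc⟩ := (Finset.mem_filter.1 hAP).2
          have := extSet_card_ge G p hp hWp hAi
          rwa [hAc] at this
  rw [hcount, hcount']
  calc p * (α - k) * P.card ≤ (P.sigma fun A => extSet G A).card := hPsum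
  _ = (Q.sigma fun B => B).card := hbij
  _ = (k + 1) * Q.card := hQsum
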